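/- Let $A \in \mathbb{R}^{d \times r^*}$ have zero row $i$, and let $(\tilde{A}(t), \tilde{B}(t), \tilde{\epsilon}(t))$ solve the gradient flow $\frac{d\tilde{\Theta}}{dt} = -\nabla L_1(\tilde{\Theta})$ on $[0, T]$ for the simplified loss $L_1(\tilde{A}, \tilde{B}, \tilde{\epsilon}) = \frac{1}{2\tilde{\epsilon}^2}\|A - \tilde{A}\tilde{B}A\|_F^2 + \frac{1}{2}\|\tilde{B}A\|_F^2 + (d-r)\log\tilde{\epsilon} + \frac{1}{2}\sum_j(1 + \log(\|\tilde{A}_j\|^2 + \tilde{\epsilon}^2))$. If $\max_{t \in [0,T]}\max_j(\|\tilde{A}(t)_j\|^2 + \tilde{\epsilon}(t)^2) \le K$, then $\|\tilde{A}^{(i)}(t)\|^2 \le e^{-t/K}\|\tilde{A}^{(i)}(0)\|^2$ for all $t \in [0, T]$, where $\tilde{A}^{(i)}$ denotes row $i$ of $\tilde{A}$. -/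

import Mathlib

open Finset Matrix Set

/-! Along the flow, `d/dt ‖Ã⁽ⁱ⁾‖² = -2 ⟨Ã⁽ⁱ⁾, ∇_{Ã⁽ⁱ⁾} L₁⟩`. Since row `i` of `A` vanishes, the
reconstruction term contributes `‖(ÃB̃A)⁽ⁱ⁾‖² / ε̃² ≥ 0` to this correlation and the
log-regulariser contributes `∑ⱼ Ãᵢⱼ² / (‖Ãⱼ‖² + ε̃²) ≥ ‖Ã⁽ⁱ⁾‖² / K`. Hence
`f = ‖Ã⁽ⁱ⁾‖²` satisfies `f' ≤ -2f/K ≤ -f/K`, and Grönwall's inequality gives the decay. -/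

theorem le_exp_mul_mul_of_hasDerivAt_le {f f' : ℝ → ℝ} {c a b : ℝ}
    (hf : ∀ x ∈ Icc a b, HasDerivAt f (f' x) x) (bound : ∀ x ∈ Icc a b, f' x ≤ c * f x) :
    ∀ x ∈ Icc a b, f x ≤ Real.exp (c * (x - a)) * f a := by
  intro x hx
  have h := le_gronwallBound_of_liminf_deriv_right_le (f' := f') (ε := 0)
    (fun y hy => (hf y hy).continuousAt.continuousWithinAt)
    (fun y hy r hr => (hf y (Ico_subset_Icc_self hy)).hasDerivWithinAt.liminf_right_slope_le hr)
    le_rfl (fun y hy => by simpa using bound y (Ico_subset_Icc_self hy)) x hx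
  rwa [gronwallBound_ε0, mul_comm] at h

theorem hasDerivAt_sum_sq_add_mul {α : Type*} [Fintype α] (v w : α → ℝ) :
    HasDerivAt (fun u => ∑ a, (v a + u * w a) ^ 2) (2 * ∑ a, v a * w a) 0 := by
  refine (HasDerivAt.fun_sum fun a _ =>
    (((hasDerivAt_id (0:ℝ)).mul_const (w a)).const_add (v a)).pow 2).congr_deriv ?_
  simp [Finset.mul_sum, mul_assoc]

variable {ι κ ρ : Type*} [Fintype ι] [Fintype κ] [Fintype ρ]

theorem hasDerivAt_sum_sum_sq_add_mul (X Y : Matrix ι ρ ℝ) :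
    HasDerivAt (fun u => ∑ k, ∑ l, (X k l + u * Y k l) ^ 2) (2 * ∑ k, ∑ l, X k l * Y k l) 0 := by
  simpa [Finset.mul_sum] using
    HasDerivAt.fun_sum (u := univ) fun k _ => hasDerivAt_sum_sq_add_mul (X k) (Y k)

/-- The simplified linear-VAE loss `L₁(M, B, ε)`, for `A ∈ ℝ^{ι × ρ}`. -/
noncomputable def vaeLoss (A : Matrix ι ρ ℝ) (M : Matrix ι κ ℝ) (B : Matrix κ ι ℝ) (ε : ℝ) : ℝ :=
  1 / (2 * ε ^ 2) * ∑ k, ∑ l, (A - M * B * A) k l ^ 2 + 1 / 2 * ∑ k, ∑ l, (B * A) k l ^ 2 +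
    ((Fintype.card ι : ℝ) - Fintype.card κ) * Real.log ε +
    1 / 2 * ∑ j, (1 + Real.log (∑ k, M k j ^ 2 + ε ^ 2))

noncomputable def vaeLossGradA (A : Matrix ι ρ ℝ) (M : Matrix ι κ ℝ) (B : Matrix κ ι ℝ) (ε : ℝ)
    (k : ι) (j : κ) : ℝ :=
  -(1 / ε ^ 2) * ∑ l, (A - M * B * A) k l * (B * A) j l + M k j / (∑ k', M k' j ^ 2 + ε ^ 2)

theorem hasDerivAt_vaeLoss_add_smul_single [DecidableEq ι] [DecidableEq κ]
    (A : Matrix ι ρ ℝ) (M : Matrix ι κ ℝ) (B : Matrix κ ι ℝ) {ε : ℝ} (hε : ε ≠ 0)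
    (k : ι) (j : κ) :
    HasDerivAt (fun u : ℝ => vaeLoss A (M + u • (single k j 1 : Matrix ι κ ℝ)) B ε)
      (vaeLossGradA A M B ε k j) 0 := by
  set E : Matrix ι κ ℝ := single k j 1
  have hrec := hasDerivAt_sum_sum_sq_add_mul (A - M * B * A) (-(E * (B * A)))
  have hlog : ∀ j', HasDerivAt (fun u => Real.log (∑ k', (M k' j' + u * E k' j') ^ 2 + ε ^ 2))
      ((2 * ∑ k', M k' j' * E k' j') / (∑ k', M k' j' ^ 2 + ε ^ 2)) 0 := fun j' => by
    simpa using ((hasDerivAt_sum_sq_add_mul (fun k' => M k' j') (fun k' => E k' j')).add_const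
      (ε ^ 2)).log (by positivity)
  have h := (((hrec.const_mul (1 / (2 * ε ^ 2))).add_const
    (1 / 2 * ∑ k, ∑ l, (B * A) k l ^ 2)).add_const
    (((Fintype.card ι : ℝ) - Fintype.card κ) * Real.log ε)).fun_add
    ((HasDerivAt.fun_sum (u := univ) fun j' _ => (hlog j').const_add 1).const_mul (1 / 2))
  refine (h.congr_deriv ?_).congr_of_eventuallyEq (Filter.Eventually.of_forall fun u => ?_)
  · have hreconstr : ∑ k', ∑ l, (A - M * B * A) k' l * (-(E * (B * A))) k' l
        = -∑ l, (A - M * B * A) k l * (B * A) j l := by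
      rw [Finset.sum_eq_single k]
      · simp [E]
      · intro k' _ hk'; simp [E, hk']
      · simp
    have hsingle : ∀ j', ∑ k', M k' j' * E k' j' = if j' = j then M k j else 0 := by
      intro j'
      rw [Finset.sum_eq_single k]
      · by_cases h : j' = j
        · simp [E, h]
        · simp [E, h, Ne.symm h]
      · intro k' _ hk'; simp [E, hk'.symm]
      · simp
    simp only [vaeLossGradA, hreconstr, hsingle, mul_ite, mul_zero, ite_div, zero_div,
      Finset.sum_ite_eq', Finset.mem_univ, if_true]
    field_simp
  · have hres : A - (M + u • E) * B * A = (A - M * B * A) + u • -(E * (B * A)) := by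
      rw [Matrix.add_mul, Matrix.add_mul, Matrix.smul_mul, Matrix.smul_mul, Matrix.mul_assoc E,
        smul_neg]
      abel
    simp only [vaeLoss, hres, Matrix.add_apply, Matrix.smul_apply, smul_eq_mul]

theorem sum_sq_div_le_sum_mul_vaeLossGradA {A : Matrix ι ρ ℝ} {k : ι} (hrow : ∀ l, A k l = 0)
    (M : Matrix ι κ ℝ) (B : Matrix κ ι ℝ) {ε K : ℝ} (hε : ε ≠ 0)
    (hcol : ∀ j, ∑ k', M k' j ^ 2 + ε ^ 2 ≤ K) :
    (∑ j, M k j ^ 2) / K ≤ ∑ j, M k j * vaeLossGradA A M B ε k j := by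
  have hres : ∀ l, (A - M * B * A) k l = -∑ j, M k j * (B * A) j l := by
    intro l; simp [hrow, Matrix.mul_assoc, Matrix.mul_apply]
  have hcorr : ∑ j, M k j * vaeLossGradA A M B ε k j
      = 1 / ε ^ 2 * ∑ l, (M * B * A) k l ^ 2 + ∑ j, M k j ^ 2 / (∑ k', M k' j ^ 2 + ε ^ 2) := by
    have hMBA : ∀ l, (M * B * A) k l = ∑ j, M k j * (B * A) j l := by
      intro l; rw [Matrix.mul_assoc, Matrix.mul_apply]
    simp only [vaeLossGradA, hres, mul_add, Finset.sum_add_distrib]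
    congr 1
    · simp only [hMBA, Finset.mul_sum, sq]
      rw [Finset.sum_comm]
      exact Finset.sum_congr rfl fun l _ => Finset.sum_congr rfl fun j _ => by ring
    · refine Finset.sum_congr rfl fun j _ => ?_
      ring
  have hdiv : ∀ j, M k j ^ 2 / K ≤ M k j ^ 2 / (∑ k', M k' j ^ 2 + ε ^ 2) := fun j =>
    div_le_div_of_nonneg_left (sq_nonneg _) (by positivity) (hcol j)
  rw [hcorr, Finset.sum_div]
  exact le_add_of_nonneg_of_le (by positivity) (Finset.sum_le_sum fun j _ => hdiv j)

theorem stmt_15_general (d rstar r : ℕ)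
    (A : Matrix (Fin d) (Fin rstar) ℝ)
    (i : Fin d) (hrow : ∀ l, A i l = 0)
    (T K : ℝ) (hK : 0 < K)
    (L1 : Matrix (Fin d) (Fin r) ℝ → Matrix (Fin r) (Fin d) ℝ → ℝ → ℝ)
    (hL1 : ∀ M B (ε : ℝ), 0 < ε →
      L1 M B ε = (1 / (2 * ε ^ 2)) * (∑ k, ∑ l, ((A - M * B * A) k l) ^ 2) +
        (1 / 2) * (∑ k, ∑ l, ((B * A) k l) ^ 2) + ((d : ℝ) - r) * Real.log ε +
        (1 / 2) * ∑ j, (1 + Real.log ((∑ k, (M k j) ^ 2) + ε ^ 2)))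
    (Atil : ℝ → Matrix (Fin d) (Fin r) ℝ)
    (Btil : ℝ → Matrix (Fin r) (Fin d) ℝ)
    (epstil : ℝ → ℝ)
    (heps : ∀ t ∈ Set.Icc 0 T, 0 < epstil t)
    (hflowA : ∀ t ∈ Set.Icc 0 T, ∀ k j, HasDerivAt (fun s => Atil s k j)
      (-(deriv (fun u : ℝ =>
        L1 (Atil t + u • (Matrix.single k j 1 : Matrix (Fin d) (Fin r) ℝ))
          (Btil t) (epstil t)) 0)) t)
    (hbound : ∀ t ∈ Set.Icc 0 T, ∀ j, (∑ k, (Atil t k j) ^ 2) + (epstil t) ^ 2 ≤ K) :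
    ∀ t ∈ Set.Icc 0 T,
      (∑ j, (Atil t i j) ^ 2) ≤ Real.exp (-t / K) * ∑ j, (Atil 0 i j) ^ 2 := by
  set grad := fun s j => vaeLossGradA A (Atil s) (Btil s) (epstil s) i j
  have hL : ∀ M B ε, 0 < ε → L1 M B ε = vaeLoss A M B ε := fun M B ε hε => by
    rw [hL1 M B ε hε, vaeLoss, Fintype.card_fin, Fintype.card_fin]
  have hentry : ∀ s ∈ Icc 0 T, ∀ j, HasDerivAt (fun s => Atil s i j) (-grad s j) s := by
    intro s hs j
    have hgrad := hasDerivAt_vaeLoss_add_smul_single A (Atil s) (Btil s) (heps s hs).ne' i j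
    simpa only [hL _ _ _ (heps s hs), hgrad.deriv] using hflowA s hs i j
  have hrowNorm : ∀ s ∈ Icc 0 T, HasDerivAt (fun s => ∑ j, Atil s i j ^ 2)
      (-2 * ∑ j, Atil s i j * grad s j) s := by
    intro s hs
    refine (HasDerivAt.fun_sum fun j _ => (hentry s hs j).pow 2).congr_deriv ?_
    rw [Finset.mul_sum]
    exact Finset.sum_congr rfl fun j _ => by push_cast; ring
  have hdecay : ∀ s ∈ Icc 0 T,
      -2 * ∑ j, Atil s i j * grad s j ≤ -(1 / K) * ∑ j, Atil s i j ^ 2 := by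
    intro s hs
    have hcorr := sum_sq_div_le_sum_mul_vaeLossGradA hrow (Atil s) (Btil s) (heps s hs).ne'
      (hbound s hs)
    have hnonneg : 0 ≤ (∑ j, Atil s i j ^ 2) / K := by positivity
    calc -2 * ∑ j, Atil s i j * grad s j ≤ -2 * ((∑ j, Atil s i j ^ 2) / K) :=
          mul_le_mul_of_nonpos_left hcorr (by norm_num)
      _ ≤ -((∑ j, Atil s i j ^ 2) / K) := by linarith
      _ = -(1 / K) * ∑ j, Atil s i j ^ 2 := by ring
  intro t ht
  have hgronwall := le_exp_mul_mul_of_hasDerivAt_le hrowNorm hdecay t ht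
  rwa [sub_zero, neg_mul, one_div_mul_eq_div, ← neg_div] at hgronwall

/-- Exponential decay of extra decoder rows along the gradient flow of the simplified
linear VAE loss `L₁`. The gradient flow is stated entrywise: each parameter entry moves
in the direction of minus the corresponding partial derivative (expressed as the
derivative at `0` of a rank-one perturbation, and as the ordinary derivative for `ε̃`). -/
theorem stmt_15 (d rstar r : ℕ)
    (A : Matrix (Fin d) (Fin rstar) ℝ)
    (i : Fin d) (hrow : ∀ l, A i l = 0)
    (T K : ℝ) (hT : 0 ≤ T) (hK : 0 < K)
    (L1 : Matrix (Fin d) (Fin r) ℝ → Matrix (Fin r) (Fin d) ℝ → ℝ → ℝ)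
    (hL1 : ∀ M B (ε : ℝ), 0 < ε →
      L1 M B ε = (1 / (2 * ε ^ 2)) * (∑ k, ∑ l, ((A - M * B * A) k l) ^ 2) +
        (1 / 2) * (∑ k, ∑ l, ((B * A) k l) ^ 2) + ((d : ℝ) - r) * Real.log ε +
        (1 / 2) * ∑ j, (1 + Real.log ((∑ k, (M k j) ^ 2) + ε ^ 2)))
    (Atil : ℝ → Matrix (Fin d) (Fin r) ℝ)
    (Btil : ℝ → Matrix (Fin r) (Fin d) ℝ)
    (epstil : ℝ → ℝ)
    (heps : ∀ t ∈ Set.Icc 0 T, 0 < epstil t)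
    (hflowA : ∀ t ∈ Set.Icc 0 T, ∀ k j, HasDerivAt (fun s => Atil s k j)
      (-(deriv (fun u : ℝ =>
        L1 (Atil t + u • (Matrix.single k j 1 : Matrix (Fin d) (Fin r) ℝ))
          (Btil t) (epstil t)) 0)) t)
    (hflowB : ∀ t ∈ Set.Icc 0 T, ∀ j k, HasDerivAt (fun s => Btil s j k)
      (-(deriv (fun u : ℝ =>
        L1 (Atil t) (Btil t + u • (Matrix.single j k 1 : Matrix (Fin r) (Fin d) ℝ))
          (epstil t)) 0)) t)
    (hfloweps : ∀ t ∈ Set.Icc 0 T,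
      HasDerivAt epstil (-(deriv (fun u : ℝ => L1 (Atil t) (Btil t) u) (epstil t))) t)
    (hbound : ∀ t ∈ Set.Icc 0 T, ∀ j, (∑ k, (Atil t k j) ^ 2) + (epstil t) ^ 2 ≤ K) :
    ∀ t ∈ Set.Icc 0 T,
      (∑ j, (Atil t i j) ^ 2) ≤ Real.exp (-t / K) * ∑ j, (Atil 0 i j) ^ 2 :=
  stmt_15_general d rstar r A i hrow T K hK L1 hL1 Atil Btil epstil heps hflowA hbound
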